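/- arXiv:1204.4045 — 6 statements merged into one kernel-verified Lean document; each statement's English description precedes it below -/
import Mathlib

section
/- Strong AMC (version 1) implies strong AMC (version 3): if for every set X there is an inhabited collection family (Y_i)_{i∈I} together with surjections q_i : Y_i ↠ X, then every set X is a member of some collection family. -/
/-! Adjoin `X` to a collection family `Y` that covers it via `q i₀ : Y i₀ ↠ X`. A surjection
`p : E ↠ X` pulls back along `q i₀` to a surjection onto `Y i₀`; a member of `Y` refining that
pullback, composed with `q i₀`, refines `p`. -/

/-- A surjection `p : E ↠ Y i` is refined by one of the form `q : Y i' ↠ Y i`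
if there is `f : Y i' → E` with `p ∘ f = q`.  A family `(Y i)_{i ∈ I}` is a
collection family if every surjection onto some member is so refined. -/
def IsCollectionFamily {I : Type} (Y : I → Type) : Prop :=
  ∀ (i : I) (E : Type) (p : E → Y i), Function.Surjective p →
    ∃ (i' : I) (q : Y i' → Y i), Function.Surjective q ∧
      ∃ f : Y i' → E, ∀ z, p (f z) = q z

theorem Function.Surjective.pullback_snd {X Y Z : Type*} {f : X → Y} (hf : f.Surjective)
    (g : Z → Y) : (Function.Pullback.snd : f.Pullback g → Z).Surjective := fun z =>
  let ⟨x, hx⟩ := hf (g z)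
  ⟨⟨(x, z), hx⟩, rfl⟩

namespace IsCollectionFamily

variable {I : Type} {Y : I → Type}

theorem exists_refinement_of_surjective (hY : IsCollectionFamily Y) {X : Type} {i₀ : I}
    {q : Y i₀ → X} (hq : q.Surjective) {E : Type} {p : E → X} (hp : p.Surjective) :
    ∃ (i' : I) (q' : Y i' → X), q'.Surjective ∧ ∃ f : Y i' → E, ∀ z, p (f z) = q' z := by
  obtain ⟨i', r, hr, f, hf⟩ := hY i₀ _ _ (hp.pullback_snd q)
  refine ⟨i', q ∘ r, hq.comp hr, fun z => (f z).fst, fun z => ?_⟩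
  rw [Function.comp_apply, ← hf z]
  exact (f z).2

theorem option_elim (hY : IsCollectionFamily Y) {X : Type} {i₀ : I} {q : Y i₀ → X}
    (hq : q.Surjective) : IsCollectionFamily fun o : Option I => o.elim X Y := by
  rintro (_ | i) E p hp
  · obtain ⟨i', q', hq', f, hf⟩ := hY.exists_refinement_of_surjective hq hp
    exact ⟨some i', q', hq', f, hf⟩
  · obtain ⟨i', q', hq', f, hf⟩ := hY i E p hp
    exact ⟨some i', q', hq', f, hf⟩

end IsCollectionFamily

/-- strong AMC (version 1) implies strong AMC (version 3). -/
theorem stmt_1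
    (h1 : ∀ X : Type, ∃ (I : Type) (Y : I → Type),
      Nonempty I ∧ IsCollectionFamily Y ∧
      ∃ q : ∀ i, Y i → X, ∀ i, Function.Surjective (q i)) :
    ∀ X : Type, ∃ (I : Type) (Y : I → Type),
      IsCollectionFamily Y ∧ ∃ i : I, Y i = X := by
  intro X
  obtain ⟨I, Y, ⟨i₀⟩, hY, q, hq⟩ := h1 X
  exact ⟨Option I, fun o => o.elim X Y, hY.option_elim (hq i₀), none, rfl⟩
end

section
/- Strong AMC (version 3) implies strong AMC (version 2): if every set X is a member of a collection family, then for every set X there exist an inhabited collection family (Y_i)_{i∈I} and surjections q_i : Y_i ↠ X such that each surjection p : E ↠ Y_i is refined by a surjection q : Y_{i'} ↠ Y_i commuting with the maps to X (i.e., q_{i'} = q_i ∘ q). -/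
structure SurjOnto {I : Type} (Y : I → Type) (X : Type) where
  index : I
  map : Y index → X
  surjective : Function.Surjective map

namespace IsCollectionFamily

variable {I : Type} {Y : I → Type} {X : Type}

theorem exists_refinement_over (hY : IsCollectionFamily Y) (j : SurjOnto Y X) {E : Type}
    (p : E → Y j.index) (hp : Function.Surjective p) :
    ∃ (j' : SurjOnto Y X) (r : Y j'.index → Y j.index), Function.Surjective r ∧
      (∀ z, j.map (r z) = j'.map z) ∧ ∃ f : Y j'.index → E, ∀ z, p (f z) = r z := by
  obtain ⟨i', r, hr, f, hf⟩ := hY j.index E p hp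
  exact ⟨⟨i', j.map ∘ r, j.surjective.comp hr⟩, r, hr, fun _ => rfl, f, hf⟩

theorem surjOnto (hY : IsCollectionFamily Y) :
    IsCollectionFamily fun j : SurjOnto Y X => Y j.index := by
  intro j E p hp
  obtain ⟨j', r, hr, -, f, hf⟩ := hY.exists_refinement_over j p hp
  exact ⟨j', r, hr, f, hf⟩

end IsCollectionFamily

/-- strong AMC (version 3) implies strong AMC (version 2). -/
theorem stmt_2
    (h3 : ∀ X : Type, ∃ (I : Type) (Y : I → Type),
      IsCollectionFamily Y ∧ ∃ i : I, Y i = X) :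
    ∀ X : Type, ∃ (I : Type) (Y : I → Type),
      Nonempty I ∧ IsCollectionFamily Y ∧
      ∃ q : ∀ i, Y i → X,
        (∀ i, Function.Surjective (q i)) ∧
        ∀ (i : I) (E : Type) (p : E → Y i), Function.Surjective p →
          ∃ (i' : I) (r : Y i' → Y i), Function.Surjective r ∧
            (∀ z, q i (r z) = q i' z) ∧
            ∃ f : Y i' → E, ∀ z, p (f z) = r z := by
  intro X
  obtain ⟨I, Y, hY, i, rfl⟩ := h3 X
  exact ⟨SurjOnto Y (Y i), fun j => Y j.index, ⟨⟨i, id, Function.surjective_id⟩⟩, hY.surjOnto,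
    fun j => j.map, fun j => j.surjective, fun j _ p hp => hY.exists_refinement_over j p hp⟩
end

section
/- Strong AMC implies AMC: if for every set X there exist an inhabited collection family (Y_i)_{i∈I} and surjections p_i : Y_i ↠ X such that each surjection onto any Y_i is refined by a map Y_{i'} → Y_i over X, then for every set X there is a set {p_i : Y_i ↠ X : i ∈ I} of surjections onto X such that every surjection p : Y ↠ X is refined by some p_i (i.e., there is f : Y_i → Y with p∘f = p_i). -/
/-!
Given a surjection `g : Z ↠ X`, pull it back along one of the surjections `q i₀ : Y i₀ ↠ X`.
The projection of the pullback onto `Y i₀` is again surjective, so strong AMC refines it by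
some `Y i' → Y i₀` over `X`; composing with the other projection gives a map `Y i' → Z` over `X`.
-/

open Function

theorem Function.Pullback.fst_surjective {X Y Z : Type*} (f : X → Y) {g : Z → Y}
    (hg : Surjective g) : Surjective (Pullback.fst : f.Pullback g → X) := fun x ↦
  let ⟨z, hz⟩ := hg (f x)
  ⟨⟨(x, z), hz.symm⟩, rfl⟩

theorem exists_refinement_of_refines_pullbacks {X I : Type} {Y : I → Type}
    (q : ∀ i, Y i → X) (i₀ : I)
    (href : ∀ (E : Type) (p : E → Y i₀), Surjective p →
      ∃ (i' : I) (r : Y i' → Y i₀), (∀ z, q i₀ (r z) = q i' z) ∧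
        ∃ f : Y i' → E, ∀ z, p (f z) = r z)
    {Z : Type} (g : Z → X) (hg : Surjective g) :
    ∃ (i : I) (f : Y i → Z), ∀ y, g (f y) = q i y := by
  obtain ⟨i', r, hr, f, hf⟩ :=
    href ((q i₀).Pullback g) Pullback.fst (Pullback.fst_surjective (q i₀) hg)
  refine ⟨i', fun y ↦ (f y).snd, fun y ↦ ?_⟩
  calc g (f y).snd = q i₀ (f y).fst := (f y).2.symm
    _ = q i' y := by rw [hf, hr]

/-- strong AMC (version 2: an inhabited collection family with
surjections to X, refinements over X) implies AMC (the weak form). -/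
theorem stmt_3
    (h2 : ∀ X : Type, ∃ (I : Type) (Y : I → Type),
      Nonempty I ∧ IsCollectionFamily Y ∧
      ∃ q : ∀ i, Y i → X,
        (∀ i, Function.Surjective (q i)) ∧
        ∀ (i : I) (E : Type) (p : E → Y i), Function.Surjective p →
          ∃ (i' : I) (r : Y i' → Y i), Function.Surjective r ∧
            (∀ z, q i (r z) = q i' z) ∧
            ∃ f : Y i' → E, ∀ z, p (f z) = r z) :
    ∀ X : Type, ∃ (I : Type) (Y : I → Type) (p : ∀ i, Y i → X),
      (∀ i, Function.Surjective (p i)) ∧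
      ∀ (Z : Type) (g : Z → X), Function.Surjective g →
        ∃ (i : I) (f : Y i → Z), ∀ y, g (f y) = p i y := by
  intro X
  obtain ⟨I, Y, ⟨i₀⟩, -, q, hq, href⟩ := h2 X
  refine ⟨I, Y, q, hq, fun Z g hg ↦ exists_refinement_of_refines_pullbacks q i₀ ?_ g hg⟩
  intro E p hp
  obtain ⟨i', r, -, hr, hf⟩ := href i₀ E p hp
  exact ⟨i', r, hr, hf⟩
end

section
/- In a commuting cube of sets in which the right face is a pullback, the bottom and left faces are covering squares, and the back face is a collection square, the front face is also a collection square. -/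
/-!
Since the right face is a pullback, a point of `F` is determined by its images in `B` and `E`,
and the fibre of `fF` over `e` is identified with the fibre of `fB` over `sA e`. A cover of a
front fibre is therefore a cover of a back fibre; the collection property of the back face yields
some `c` over `sA e` with a lift on `gB⁻¹(c)`, the bottom covering square moves `c` to a `g` over
`e`, and the lift is pulled back along `sD : gF⁻¹(g) → gB⁻¹(c)`.
-/

/-- A covering square (right edge `f`, bottom `p`, left `g`, top `q`):
the square commutes, `p` is a surjection and the induced map `D → B ×_A C`
is a surjection. -/
def IsCoveringSq {A B C D : Type} (f : B → A) (p : C → A) (g : D → C) (q : D → B) : Prop :=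
  (∀ d, f (q d) = p (g d)) ∧ Function.Surjective p ∧
  (∀ (b : B) (c : C), f b = p c → ∃ d, q d = b ∧ g d = c)

/-- The additional collection condition of a collection square. -/
def CollCond {A B C D : Type} (f : B → A) (p : C → A) (g : D → C) (q : D → B) : Prop :=
  ∀ (a : A) (E : Type) (e : E → {b : B // f b = a}), Function.Surjective e →
    ∃ c : C, p c = a ∧ ∃ h : {d : D // g d = c} → E,
      ∀ d : {d : D // g d = c}, ((e (h d)) : {b : B // f b = a}).1 = q d.1

section Cube

variable {A B C D E F G H : Type}
  {fB : B → A} {pB : C → A} {gB : D → C} {qB : D → B}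
  {fF : F → E} {pF : G → E} {gF : H → G} {qF : H → F}
  {sD : H → D} {sB : F → B} {sC : G → C} {sA : E → A}

theorem eq_of_isPullback
    (hComm : ∀ x : F, fB (sB x) = sA (fF x))
    (hPb : ∀ (b : B) (e : E), fB b = sA e → ∃! x : F, sB x = b ∧ fF x = e)
    {x x' : F} (hs : sB x = sB x') (hf : fF x = fF x') : x = x' :=
  (hPb _ _ (hComm x)).unique ⟨rfl, rfl⟩ ⟨hs.symm, hf.symm⟩

theorem IsCoveringSq.surjective_left {f : B → A} {p : C → A} {g : D → C} {q : D → B}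
    (hsq : IsCoveringSq f p g q) (hf : Function.Surjective f) : Function.Surjective g := by
  intro c
  obtain ⟨b, hb⟩ := hf (p c)
  obtain ⟨d, -, hd⟩ := hsq.2.2 b c hb
  exact ⟨d, hd⟩

theorem isCoveringSq_front
    (htop : ∀ h : H, sB (qF h) = qB (sD h))
    (hfront : ∀ h : H, fF (qF h) = pF (gF h))
    (hrComm : ∀ x : F, fB (sB x) = sA (fF x))
    (hrPb : ∀ (b : B) (e : E), fB b = sA e → ∃! x : F, sB x = b ∧ fF x = e)
    (hbot : IsCoveringSq pB sA pF sC) (hleft : IsCoveringSq gB sC gF sD)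
    (hback : IsCoveringSq fB pB gB qB) :
    IsCoveringSq fF pF gF qF := by
  refine ⟨hfront, hbot.surjective_left hback.2.1, fun x g hxg => ?_⟩
  have hx : fB (sB x) = pB (sC g) := by rw [hrComm, hxg, hbot.1]
  obtain ⟨d, hdx, hdg⟩ := hback.2.2 _ _ hx
  obtain ⟨h, hhd, hhg⟩ := hleft.2.2 d g hdg
  refine ⟨h, eq_of_isPullback hrComm hrPb ?_ ?_, hhg⟩
  · rw [htop, hhd, hdx]
  · rw [hfront, hhg, hxg]

theorem collCond_front
    (htop : ∀ h : H, sB (qF h) = qB (sD h))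
    (hfront : ∀ h : H, fF (qF h) = pF (gF h))
    (hrComm : ∀ x : F, fB (sB x) = sA (fF x))
    (hrPb : ∀ (b : B) (e : E), fB b = sA e → ∃! x : F, sB x = b ∧ fF x = e)
    (hbot : IsCoveringSq pB sA pF sC) (hleft : IsCoveringSq gB sC gF sD)
    (hback : CollCond fB pB gB qB) :
    CollCond fF pF gF qF := by
  intro e X cover hcover
  let backCover : X → {b : B // fB b = sA e} :=
    fun t => ⟨sB (cover t).1, by rw [hrComm, (cover t).2]⟩
  have hbackCover : Function.Surjective backCover := by
    intro b
    obtain ⟨x, ⟨hxb, hxe⟩, -⟩ := hrPb b.1 e b.2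
    obtain ⟨t, ht⟩ := hcover ⟨x, hxe⟩
    exact ⟨t, Subtype.ext (by simp only [backCover, ht, hxb])⟩
  obtain ⟨c, hc, lift, hlift⟩ := hback (sA e) X backCover hbackCover
  obtain ⟨g, hgc, hge⟩ := hbot.2.2 c e hc
  have hsD : ∀ h : {h : H // gF h = g}, gB (sD h.1) = c := fun h => by
    rw [hleft.1, h.2, hgc]
  refine ⟨g, hge, fun h => lift ⟨sD h.1, hsD h⟩, fun h => ?_⟩
  refine eq_of_isPullback hrComm hrPb ?_ ?_
  · rw [htop]
    exact hlift ⟨sD h.1, hsD h⟩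
  · rw [(cover _).2, hfront, h.2, hge]

end Cube

/-- in a commuting cube of sets whose right face is a pullback,
whose bottom and left faces are covering squares and whose back face is a
collection square, the front face is a collection square.

Back face: `qB : D → B` over `pB : C → A` (left `gB`, right `fB`);
front face: `qF : H → F` over `pF : G → E` (left `gF`, right `fF`);
connecting maps `sD : H → D`, `sB : F → B`, `sC : G → C`, `sA : E → A`. -/
theorem stmt_7 {A B C D E F G H : Type}
    (fB : B → A) (pB : C → A) (gB : D → C) (qB : D → B)
    (fF : F → E) (pF : G → E) (gF : H → G) (qF : H → F)
    (sD : H → D) (sB : F → B) (sC : G → C) (sA : E → A)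
    -- the cube commutes:
    (htop : ∀ h : H, sB (qF h) = qB (sD h))
    (hfront : ∀ h : H, fF (qF h) = pF (gF h))
    -- the right face is a pullback:
    (hrIsComm : ∀ x : F, fB (sB x) = sA (fF x))
    (hrIsPb : ∀ (b : B) (e : E), fB b = sA e → ∃! x : F, sB x = b ∧ fF x = e)
    -- the bottom face is a covering square:
    (hbot : IsCoveringSq pB sA pF sC)
    -- the left face is a covering square:
    (hleft : IsCoveringSq gB sC gF sD)
    -- the back face is a collection square:
    (hback1 : IsCoveringSq fB pB gB qB) (hback2 : CollCond fB pB gB qB) :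
    IsCoveringSq fF pF gF qF ∧ CollCond fF pF gF qF :=
  ⟨isCoveringSq_front htop hfront hrIsComm hrIsPb hbot hleft hback1,
    collCond_front htop hfront hrIsComm hrIsPb hbot hleft hback2⟩
end

section
/- Let f : B → A fit into a collection square with left edge g : D → C, bottom p : C ↠ A and top q : D → B. If Φ is an inductive definition on S obtained from f as in the Set Compactness construction, then the class J(Φ,U) = { x ∈ S : there exists a proof w ∈ W(g) with ass(w) ⊆ U and conc(w) = x } is Φ-closed, contains U, and is contained in every Φ-closed subclass of S containing U; hence J(Φ,U) = I(Φ,U). -/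
/-!
Proof trees over `W(g)` realise the inductive generation of `I(Φ, U)`. A node over `s ∈ S`
has no branches, because the square commutes and `f` misses `S`; so it is a one-line proof of
`s` from `{s}`. For closure under a rule `(X, a)`, collection applied to the cover
`X ↠ f⁻¹(X, a)` yields one node `c` over `(X, a)` whose branches are labelled by elements of
`X`, and grafting chosen proofs of these elements below `c` proves `a`. Minimality is
W-induction: since `D → C ×_{Φ+S} Ψ` is a cover, every premise `b ∈ X` of a node over
`(X, a)` is the conclusion of some branch.
-/

/-- The W-type associated to `g : D → C`. -/
inductive WT (C D : Type) (g : D → C) : Type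
  | sup (c : C) (t : ∀ d : D, g d = c → WT C D g) : WT C D g

/-- `Ψ = {(X, a, b) : (X, a) ∈ Φ, b ∈ X}`. -/
def PsiT {S : Type} (Φ : Set (Set S × S)) : Type :=
  {t : (Set S × S) × S // t.1 ∈ Φ ∧ t.2 ∈ t.1.1}

/-- The map `f : Ψ → Φ + S` obtained by composing the projection `h : Ψ → Φ`
with the sum inclusion. -/
def fmap {S : Type} (Φ : Set (Set S × S)) (t : PsiT Φ) :
    ({φ : Set S × S // φ ∈ Φ} ⊕ S) :=
  Sum.inl ⟨t.1.1, t.2.1⟩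

section
variable {S : Type} {Φ : Set (Set S × S)} {C D : Type} (g : D → C)
  (p : C → ({φ : Set S × S // φ ∈ Φ} ⊕ S)) (q : D → PsiT Φ)

/-- The conclusion of a tree in `W(g)`. -/
def conc : WT C D g → S
  | .sup c _ => Sum.elim (fun φ => φ.1.2) (fun s => s) (p c)

/-- The set of assumptions of a tree in `W(g)`. -/
def ass : WT C D g → Set S
  | .sup c t =>
      Sum.elim (fun _ => {s | ∃ (d : D) (h : g d = c), s ∈ ass (t d h)})
        (fun s => {s}) (p c)

/-- A tree is a proof if it and all its subtrees are well-formed: whenever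
`p c = (X, a) ∈ Φ`, the conclusion of `t d` is the third component of `q d`. -/
def isProof : WT C D g → Prop
  | .sup c t =>
      (∀ φ : {φ : Set S × S // φ ∈ Φ}, p c = Sum.inl φ →
        ∀ (d : D) (h : g d = c), conc g p (t d h) = (q d).1.2) ∧
      ∀ (d : D) (h : g d = c), isProof (t d h)

end

/-- `A` is `Φ`-closed. -/
def PhiClosed {S : Type} (Φ : Set (Set S × S)) (A : Set S) : Prop :=
  ∀ (X : Set S) (a : S), (X, a) ∈ Φ → X ⊆ A → a ∈ A

section ProofTrees

variable {S : Type} {Φ : Set (Set S × S)} {C D : Type} {g : D → C}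
  {p : C → ({φ : Set S × S // φ ∈ Φ} ⊕ S)} {q : D → PsiT Φ}

variable (g p q) in
def provedFrom (U : Set S) : Set S :=
  {x | ∃ w : WT C D g, isProof g p q w ∧ ass g p w ⊆ U ∧ conc g p w = x}

lemma conc_sup_of_eq_inl {c : C} {t : ∀ d, g d = c → WT C D g} {φ : {φ // φ ∈ Φ}}
    (hc : p c = Sum.inl φ) : conc g p (.sup c t) = φ.1.2 := by
  simp only [conc, hc, Sum.elim_inl]

lemma conc_sup_of_eq_inr {c : C} {t : ∀ d, g d = c → WT C D g} {s : S}
    (hc : p c = Sum.inr s) : conc g p (.sup c t) = s := by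
  simp only [conc, hc, Sum.elim_inr]

lemma ass_sup_of_eq_inl {c : C} {t : ∀ d, g d = c → WT C D g} {φ : {φ // φ ∈ Φ}}
    (hc : p c = Sum.inl φ) :
    ass g p (.sup c t) = {s | ∃ (d : D) (h : g d = c), s ∈ ass g p (t d h)} := by
  simp only [ass, hc, Sum.elim_inl]

lemma ass_sup_of_eq_inr {c : C} {t : ∀ d, g d = c → WT C D g} {s : S}
    (hc : p c = Sum.inr s) : ass g p (.sup c t) = {s} := by
  simp only [ass, hc, Sum.elim_inr]

lemma surjective_premise_to_fmap_fiber {X : Set S} {a : S} (hXa : (X, a) ∈ Φ) :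
    Function.Surjective (fun b : X =>
      (⟨⟨((X, a), b.1), hXa, b.2⟩, rfl⟩ : {ψ : PsiT Φ // fmap Φ ψ = Sum.inl ⟨(X, a), hXa⟩})) := by
  rintro ⟨⟨⟨⟨X', a'⟩, b⟩, -, hb⟩, hψ⟩
  simp only [fmap, Sum.inl.injEq, Subtype.mk.injEq, Prod.mk.injEq] at hψ
  obtain ⟨rfl, rfl⟩ := hψ
  exact ⟨⟨b, hb⟩, rfl⟩

lemma fiber_eq_empty_of_eq_inr (hcomm : ∀ d : D, fmap Φ (q d) = p (g d)) {c : C} {s : S}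
    (hc : p c = Sum.inr s) (d : D) : g d ≠ c := by
  intro hd
  have h := hcomm d
  rw [hd, hc] at h
  exact Sum.inl_ne_inr h

lemma subset_provedFrom (hcomm : ∀ d : D, fmap Φ (q d) = p (g d))
    (hpsurj : Function.Surjective p) (U : Set S) : U ⊆ provedFrom g p q U := by
  intro u hu
  obtain ⟨c, hc⟩ := hpsurj (Sum.inr u)
  have hempty := fiber_eq_empty_of_eq_inr hcomm hc
  refine ⟨.sup c fun d hd => absurd hd (hempty d), ?_, ?_, conc_sup_of_eq_inr hc⟩
  · exact ⟨fun _ _ d hd => absurd hd (hempty d), fun d hd => absurd hd (hempty d)⟩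
  · rw [ass_sup_of_eq_inr hc]
    exact Set.singleton_subset_iff.mpr hu

lemma phiClosed_provedFrom
    (hcoll : ∀ (x : {φ : Set S × S // φ ∈ Φ} ⊕ S) (E : Type)
      (e : E → {ψ : PsiT Φ // fmap Φ ψ = x}), Function.Surjective e →
      ∃ c : C, p c = x ∧ ∃ h : {d : D // g d = c} → E,
        ∀ d : {d : D // g d = c}, ((e (h d)) : {ψ : PsiT Φ // fmap Φ ψ = x}).1 = q d.1)
    (U : Set S) : PhiClosed Φ (provedFrom g p q U) := by
  intro X a hXa hX
  choose w hw_proof hw_ass hw_conc using fun b : X => hX b.2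
  obtain ⟨c, hc, branch, hbranch⟩ := hcoll _ _ _ (surjective_premise_to_fmap_fiber hXa)
  refine ⟨.sup c fun d hd => w (branch ⟨d, hd⟩), ⟨?_, fun _ _ => hw_proof _⟩, ?_,
    conc_sup_of_eq_inl hc⟩
  · intro _ _ d hd
    rw [hw_conc, ← hbranch ⟨d, hd⟩]
  · rw [ass_sup_of_eq_inl hc]
    rintro s ⟨d, hd, hs⟩
    exact hw_ass _ hs

lemma conc_mem_of_isProof
    (hpb : ∀ (ψ : PsiT Φ) (c : C), fmap Φ ψ = p c → ∃ d, q d = ψ ∧ g d = c)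
    {U A : Set S} (hA : PhiClosed Φ A) (hUA : U ⊆ A) :
    ∀ w : WT C D g, isProof g p q w → ass g p w ⊆ U → conc g p w ∈ A
  | .sup c t, ⟨hwf, hsub⟩, hass => by
    cases hc : p c with
    | inr s =>
      rw [ass_sup_of_eq_inr hc] at hass
      rw [conc_sup_of_eq_inr hc]
      exact hUA (Set.singleton_subset_iff.mp hass)
    | inl φ =>
      obtain ⟨⟨X, a⟩, hXa⟩ := φ
      rw [conc_sup_of_eq_inl hc]
      rw [ass_sup_of_eq_inl hc] at hass
      refine hA X a hXa fun b hb => ?_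
      obtain ⟨d, hqd, hd⟩ := hpb ⟨((X, a), b), hXa, hb⟩ c hc.symm
      have hconc : conc g p (t d hd) = b := by rw [hwf _ hc d hd, hqd]
      rw [← hconc]
      exact conc_mem_of_isProof hpb hA hUA (t d hd) (hsub d hd)
        fun s hs => hass ⟨d, hd, hs⟩

lemma provedFrom_subset
    (hpb : ∀ (ψ : PsiT Φ) (c : C), fmap Φ ψ = p c → ∃ d, q d = ψ ∧ g d = c)
    {U A : Set S} (hA : PhiClosed Φ A) (hUA : U ⊆ A) : provedFrom g p q U ⊆ A := by
  rintro _ ⟨w, hw, hass, rfl⟩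
  exact conc_mem_of_isProof hpb hA hUA w hw hass

end ProofTrees

/-- given a collection square over `f : Ψ → Φ + S` with left
edge `g`, bottom `p` and top `q`, the class
`J(Φ,U) = {x : ∃ proof w with ass(w) ⊆ U and conc(w) = x}` is `Φ`-closed,
contains `U`, and is contained in every `Φ`-closed subclass containing `U`;
hence it is the least such class `I(Φ, U)`. -/
theorem stmt_10 {S : Type} (Φ : Set (Set S × S)) {C D : Type}
    (g : D → C) (p : C → ({φ : Set S × S // φ ∈ Φ} ⊕ S)) (q : D → PsiT Φ)
    -- the square commutes:
    (hcomm : ∀ d : D, fmap Φ (q d) = p (g d))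
    -- `p` is a cover and the inscribed map to the pullback is a cover:
    (hpsurj : Function.Surjective p)
    (hpb : ∀ (ψ : PsiT Φ) (c : C), fmap Φ ψ = p c → ∃ d, q d = ψ ∧ g d = c)
    -- the collection condition:
    (hcoll : ∀ (x : {φ : Set S × S // φ ∈ Φ} ⊕ S) (E : Type)
      (e : E → {ψ : PsiT Φ // fmap Φ ψ = x}), Function.Surjective e →
      ∃ c : C, p c = x ∧ ∃ h : {d : D // g d = c} → E,
        ∀ d : {d : D // g d = c}, ((e (h d)) : {ψ : PsiT Φ // fmap Φ ψ = x}).1 = q d.1)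
    (U : Set S) :
    PhiClosed Φ {x | ∃ w : WT C D g, isProof g p q w ∧ ass g p w ⊆ U ∧ conc g p w = x} ∧
    U ⊆ {x | ∃ w : WT C D g, isProof g p q w ∧ ass g p w ⊆ U ∧ conc g p w = x} ∧
    (∀ A : Set S, PhiClosed Φ A → U ⊆ A →
      {x | ∃ w : WT C D g, isProof g p q w ∧ ass g p w ⊆ U ∧ conc g p w = x} ⊆ A) :=
  ⟨phiClosed_provedFrom hcoll U, subset_provedFrom hcomm hpsurj U,
    fun _ hA hUA => provedFrom_subset hpb hA hUA⟩
end

section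
/- If U and A are classes with U ⊆ A ⊆ S, A is Φ-closed for an inductive definition Φ on S, then for every proof w in the W-type W(g) (arising from a collection square over Φ as in the Set Compactness construction): if all assumptions of w belong to U, then the conclusion of w belongs to A. -/
section
variable {S : Type} {Φ : Set (Set S × S)} {C D : Type} {g : D → C}
  {p : C → ({φ : Set S × S // φ ∈ Φ} ⊕ S)} {q : D → PsiT Φ}
  {c : C} {t : ∀ d : D, g d = c → WT C D g}

theorem conc_sup_of_inl {φ : {φ : Set S × S // φ ∈ Φ}} (hc : p c = .inl φ) :
    conc g p (.sup c t) = φ.1.2 := by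
  simp only [conc, hc, Sum.elim_inl]

theorem conc_sup_of_inr {s : S} (hc : p c = .inr s) : conc g p (.sup c t) = s := by
  simp only [conc, hc, Sum.elim_inr]

theorem ass_sup_of_inr {s : S} (hc : p c = .inr s) : ass g p (.sup c t) = {s} := by
  simp only [ass, hc, Sum.elim_inr]

theorem ass_subtree_subset_of_inl {φ : {φ : Set S × S // φ ∈ Φ}} (hc : p c = .inl φ)
    (d : D) (hd : g d = c) : ass g p (t d hd) ⊆ ass g p (.sup c t) := by
  intro s hs
  simp only [ass, hc, Sum.elim_inl]
  exact ⟨d, hd, hs⟩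

theorem exists_subtree_conc_eq_of_isProof
    (hpb : ∀ (ψ : PsiT Φ) (c : C), fmap Φ ψ = p c → ∃ d, q d = ψ ∧ g d = c)
    (hw : isProof g p q (.sup c t)) {φ : {φ : Set S × S // φ ∈ Φ}} (hc : p c = .inl φ)
    {b : S} (hb : b ∈ φ.1.1) : ∃ (d : D) (hd : g d = c), conc g p (t d hd) = b := by
  obtain ⟨d, hqd, hd⟩ := hpb ⟨(φ.1, b), φ.2, hb⟩ c (by rw [hc]; rfl)
  exact ⟨d, hd, by rw [hw.1 φ hc d hd, hqd]⟩

theorem conc_mem_of_isProof_of_ass_subset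
    (hpb : ∀ (ψ : PsiT Φ) (c : C), fmap Φ ψ = p c → ∃ d, q d = ψ ∧ g d = c)
    {A : Set S} (hA : PhiClosed Φ A) :
    ∀ w : WT C D g, isProof g p q w → ass g p w ⊆ A → conc g p w ∈ A
  | .sup c t, hw, hass => by
    cases hc : p c with
    | inl φ =>
      rw [conc_sup_of_inl hc]
      refine hA φ.1.1 φ.1.2 φ.2 fun b hb => ?_
      obtain ⟨d, hd, rfl⟩ := exists_subtree_conc_eq_of_isProof hpb hw hc hb
      exact conc_mem_of_isProof_of_ass_subset hpb hA (t d hd) (hw.2 d hd)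
        ((ass_subtree_subset_of_inl hc d hd).trans hass)
    | inr s =>
      rw [conc_sup_of_inr hc]
      exact hass (by rw [ass_sup_of_inr hc]; rfl)

end

theorem stmt_15_general {S : Type} (Φ : Set (Set S × S)) {C D : Type}
    (g : D → C) (p : C → ({φ : Set S × S // φ ∈ Φ} ⊕ S)) (q : D → PsiT Φ)
    (hpb : ∀ (ψ : PsiT Φ) (c : C), fmap Φ ψ = p c → ∃ d, q d = ψ ∧ g d = c)
    (U A : Set S) (hUA : U ⊆ A) (hA : PhiClosed Φ A) :
    ∀ w : WT C D g, isProof g p q w → ass g p w ⊆ U → conc g p w ∈ A :=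
  fun w hw hass => conc_mem_of_isProof_of_ass_subset hpb hA w hw (hass.trans hUA)

/-- if `U ⊆ A ⊆ S` with `A` Φ-closed, then for every proof `w`
in the W-type `W(g)` arising from a collection square over `f : Ψ → Φ + S`:
if all assumptions of `w` belong to `U`, then the conclusion of `w` is in `A`. -/
theorem stmt_15 {S : Type} (Φ : Set (Set S × S)) {C D : Type}
    (g : D → C) (p : C → ({φ : Set S × S // φ ∈ Φ} ⊕ S)) (q : D → PsiT Φ)
    (hcomm : ∀ d : D, fmap Φ (q d) = p (g d))
    (hpsurj : Function.Surjective p)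
    (hpb : ∀ (ψ : PsiT Φ) (c : C), fmap Φ ψ = p c → ∃ d, q d = ψ ∧ g d = c)
    (hcoll : ∀ (x : {φ : Set S × S // φ ∈ Φ} ⊕ S) (E : Type)
      (e : E → {ψ : PsiT Φ // fmap Φ ψ = x}), Function.Surjective e →
      ∃ c : C, p c = x ∧ ∃ h : {d : D // g d = c} → E,
        ∀ d : {d : D // g d = c}, ((e (h d)) : {ψ : PsiT Φ // fmap Φ ψ = x}).1 = q d.1)
    (U A : Set S) (hUA : U ⊆ A) (hA : PhiClosed Φ A) :
    ∀ w : WT C D g, isProof g p q w → ass g p w ⊆ U → conc g p w ∈ A :=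
  stmt_15_general Φ g p q hpb U A hUA hA
end
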